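/- Soundness of Herbrand's modus-ponens-free calculus: If a first-order formula A is derivable from a sentential tautology by applications of the generalized rules of simplification, γ-quantification and δ-quantification (and renamings of bound variables), then A is valid. -/

import Mathlib

namespace Herbrand

abbrev FSym := Option (ℕ ⊕ ℕ)

inductive Tm : Type where
  | var : ℕ → Tm
  | fn : FSym → List Tm → Tm

inductive Fm : Type where
  | atom : ℕ → List Tm → Fm
  | neg : Fm → Fm
  | or : Fm → Fm → Fm
  | and : Fm → Fm → Fm
  | all : ℕ → Fm → Fm
  | ex : ℕ → Fm → Fm

mutual
  def Tm.beq : Tm → Tm → Bool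
    | .var x, .var y => x == y
    | .fn f ts, .fn g us => f == g && Tm.beqList ts us
    | _, _ => false
  def Tm.beqList : List Tm → List Tm → Bool
    | [], [] => true
    | t :: ts, u :: us => Tm.beq t u && Tm.beqList ts us
    | _, _ => false
end

def Tm.height : Tm → ℕ
  | .var _ => 1
  | .fn _ ts => 1 + ts.attach.foldr (fun ⟨t, _⟩ m => max (Tm.height t) m) 0

def Tm.varsT : Tm → List ℕ
  | .var x => [x]
  | .fn _ ts => ts.attach.foldr (fun ⟨t, _⟩ l => Tm.varsT t ++ l) []

def Tm.symsT : Tm → List (FSym × ℕ)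
  | .var _ => []
  | .fn f ts => (f, ts.length) :: ts.attach.foldr (fun ⟨t, _⟩ l => Tm.symsT t ++ l) []

def Tm.substT (x : ℕ) (u : Tm) : Tm → Tm
  | .var y => if y = x then u else .var y
  | .fn f ts => .fn f (ts.attach.map fun ⟨t, _⟩ => Tm.substT x u t)

/-- A term is over the base language: no Skolem symbols, no bullet. -/
def Tm.isBaseT (t : Tm) : Prop := ∀ p ∈ t.symsT, ∃ k : ℕ, p.1 = some (Sum.inl k)

def Fm.freeVars : Fm → List ℕ
  | .atom _ ts => ts.flatMap Tm.varsT
  | .neg A => A.freeVars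
  | .or A B => A.freeVars ++ B.freeVars
  | .and A B => A.freeVars ++ B.freeVars
  | .all x A => A.freeVars.filter (· ≠ x)
  | .ex x A => A.freeVars.filter (· ≠ x)

def Fm.boundVars : Fm → List ℕ
  | .atom _ _ => []
  | .neg A => A.boundVars
  | .or A B => A.boundVars ++ B.boundVars
  | .and A B => A.boundVars ++ B.boundVars
  | .all x A => x :: A.boundVars
  | .ex x A => x :: A.boundVars

def Fm.symsF : Fm → List (FSym × ℕ)
  | .atom _ ts => ts.flatMap Tm.symsT
  | .neg A => A.symsF
  | .or A B => A.symsF ++ B.symsF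
  | .and A B => A.symsF ++ B.symsF
  | .all _ A => A.symsF
  | .ex _ A => A.symsF

/-- Naive substitution of the term `u` for the free occurrences of the variable `x`. -/
def Fm.subst (x : ℕ) (u : Tm) : Fm → Fm
  | .atom p ts => .atom p (ts.map (Tm.substT x u))
  | .neg A => .neg (Fm.subst x u A)
  | .or A B => .or (Fm.subst x u A) (Fm.subst x u B)
  | .and A B => .and (Fm.subst x u A) (Fm.subst x u B)
  | .all y A => if y = x then .all y A else .all y (Fm.subst x u A)
  | .ex y A => if y = x then .ex y A else .ex y (Fm.subst x u A)

/-- Quantifier-freeness. -/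
def Fm.qf : Fm → Prop
  | .atom _ _ => True
  | .neg A => A.qf
  | .or A B => A.qf ∧ B.qf
  | .and A B => A.qf ∧ B.qf
  | .all _ _ => False
  | .ex _ _ => False

def Fm.qfB : Fm → Bool
  | .atom _ _ => true
  | .neg A => A.qfB
  | .or A B => A.qfB && B.qfB
  | .and A B => A.qfB && B.qfB
  | .all _ _ => false
  | .ex _ _ => false

/-- A formula is over the base language. -/
def Fm.isBase (A : Fm) : Prop := ∀ p ∈ A.symsF, ∃ k : ℕ, p.1 = some (Sum.inl k)

/-- Rectified: distinct binders, and bound variables distinct from free variables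
(the tacit assumption of the paper: every occurrence of every variable is either
free or bound by a unique quantifier). -/
def Fm.rectified (A : Fm) : Prop :=
  A.boundVars.Nodup ∧ ∀ x ∈ A.boundVars, x ∉ A.freeVars

/-- Sentential (Boolean) evaluation, reading each atomic formula (a predicate symbol
together with its argument terms) as a propositional variable. -/
def Fm.sentEval (β : ℕ → List Tm → Bool) : Fm → Bool
  | .atom p ts => β p ts
  | .neg A => !(A.sentEval β)
  | .or A B => A.sentEval β || B.sentEval β
  | .and A B => A.sentEval β && B.sentEval β
  | .all _ _ => false
  | .ex _ _ => false

/-- A sentential tautology: a quantifier-free formula that evaluates to true under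
every Boolean valuation of its atoms. -/
def Fm.taut (A : Fm) : Prop := A.qf ∧ ∀ β : ℕ → List Tm → Bool, A.sentEval β = true

/-- An interpretation of the language on a domain `D`. -/
structure Interp (D : Type) where
  fns : FSym → List D → D
  prd : ℕ → List D → Prop

def Tm.eval {D : Type} (I : Interp D) (v : ℕ → D) : Tm → D
  | .var x => v x
  | .fn f ts => I.fns f (ts.attach.map fun ⟨t, _⟩ => Tm.eval I v t)

def Fm.holds {D : Type} (I : Interp D) (v : ℕ → D) : Fm → Prop
  | .atom p ts => I.prd p (ts.map (Tm.eval I v))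
  | .neg A => ¬ Fm.holds I v A
  | .or A B => Fm.holds I v A ∨ Fm.holds I v B
  | .and A B => Fm.holds I v A ∧ Fm.holds I v B
  | .all x A => ∀ d : D, Fm.holds I (Function.update v x d) A
  | .ex x A => ∃ d : D, Fm.holds I (Function.update v x d) A

/-- Validity: truth in every structure (nonempty domain) under every assignment. -/
def Fm.valid (A : Fm) : Prop :=
  ∀ (D : Type) (_ : Nonempty D) (I : Interp D) (v : ℕ → D), A.holds I v


/-- Alpha-equivalence: equality of formulas up to renaming of bound variables. -/
inductive Alpha : Fm → Fm → Prop where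
  | refl (A : Fm) : Alpha A A
  | symm {A B : Fm} : Alpha A B → Alpha B A
  | trans {A B C : Fm} : Alpha A B → Alpha B C → Alpha A C
  | negc {A B : Fm} : Alpha A B → Alpha (.neg A) (.neg B)
  | orc {A A' B B' : Fm} : Alpha A A' → Alpha B B' → Alpha (.or A B) (.or A' B')
  | andc {A A' B B' : Fm} : Alpha A A' → Alpha B B' → Alpha (.and A B) (.and A' B')
  | allc {A B : Fm} (x : ℕ) : Alpha A B → Alpha (.all x A) (.all x B)
  | exc {A B : Fm} (x : ℕ) : Alpha A B → Alpha (.ex x A) (.ex x B)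
  | allRename (x y : ℕ) (A : Fm) : y ∉ A.freeVars → y ∉ A.boundVars →
      Alpha (.all x A) (.all y (Fm.subst x (.var y) A))
  | exRename (x y : ℕ) (A : Fm) : y ∉ A.freeVars → y ∉ A.boundVars →
      Alpha (.ex x A) (.ex y (Fm.subst x (.var y) A))

/-- One-hole contexts `A[…]` in formulas. -/
inductive Ctx : Type where
  | hole : Ctx
  | negC : Ctx → Ctx
  | orL : Ctx → Fm → Ctx
  | orR : Fm → Ctx → Ctx
  | andL : Ctx → Fm → Ctx
  | andR : Fm → Ctx → Ctx
  | allC : ℕ → Ctx → Ctx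
  | exC : ℕ → Ctx → Ctx

def Ctx.fill : Ctx → Fm → Fm
  | .hole, H => H
  | .negC c, H => .neg (c.fill H)
  | .orL c B, H => .or (c.fill H) B
  | .orR B c, H => .or B (c.fill H)
  | .andL c B, H => .and (c.fill H) B
  | .andR B c, H => .and B (c.fill H)
  | .allC x c, H => .all x (c.fill H)
  | .exC x c, H => .ex x (c.fill H)

/-- `true` iff the hole is in the scope of an even number of negation symbols. -/
def Ctx.pol : Ctx → Bool
  | .hole => true
  | .negC c => !c.pol
  | .orL c _ => c.pol
  | .orR _ c => c.pol
  | .andL c _ => c.pol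
  | .andR _ c => c.pol
  | .allC _ c => c.pol
  | .exC _ c => c.pol

/-- The hole is accessible: not in the scope of any quantifier. -/
def Ctx.accessible : Ctx → Prop
  | .hole => True
  | .negC c => c.accessible
  | .orL c _ => c.accessible
  | .orR _ c => c.accessible
  | .andL c _ => c.accessible
  | .andR _ c => c.accessible
  | .allC _ _ => False
  | .exC _ _ => False

/-- Variables occurring free in the context (the hole contributing nothing). -/
def Ctx.freeVarsC : Ctx → List ℕ
  | .hole => []
  | .negC c => c.freeVarsC
  | .orL c B => c.freeVarsC ++ B.freeVars
  | .orR B c => B.freeVars ++ c.freeVarsC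
  | .andL c B => c.freeVarsC ++ B.freeVars
  | .andR B c => B.freeVars ++ c.freeVarsC
  | .allC x c => c.freeVarsC.filter (· ≠ x)
  | .exC x c => c.freeVarsC.filter (· ≠ x)

/-- `mkQ q x H` is `∃x.H` if `q = true`, and `∀x.H` if `q = false`.
A quantifier `mkQ q x` sitting in a context `c` is existentialoid iff `q = c.pol`
(i.e. `∃` under an even number of negations or `∀` under an odd number),
and universaloid iff `q = !c.pol`. -/
def mkQ (q : Bool) (x : ℕ) (H : Fm) : Fm := if q then .ex x H else .all x H

/-- Derivations in the modern version of Herbrand's modus-ponens-free calculus,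
from a start formula, recording the list of instance terms `t` used by the
applications of the generalized rule of γ-quantification. -/
inductive Deriv : Fm → Fm → List Tm → Prop where
  | refl (A : Fm) : Deriv A A []
  | gamma {B : Fm} {ts : List Tm} (c : Ctx) (q : Bool) (x : ℕ) (t : Tm) (H : Fm) :
      Deriv B (c.fill (Fm.subst x t H)) ts →
      c.accessible → q = c.pol → (∀ z ∈ t.varsT, z ∉ H.boundVars) →
      Deriv B (c.fill (mkQ q x H)) (ts ++ [t])
  | delta {B : Fm} {ts : List Tm} (c : Ctx) (q : Bool) (y : ℕ) (H : Fm) :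
      Deriv B (c.fill H) ts →
      c.accessible → q = !c.pol → y ∉ c.freeVarsC →
      Deriv B (c.fill (mkQ q y H)) ts
  | simp {B : Fm} {ts : List Tm} (c : Ctx) (H H' : Fm) :
      Deriv B (c.fill (if c.pol then Fm.or H H' else Fm.and H H')) ts →
      Alpha H H' →
      Deriv B (c.fill H) ts
  | alpha {B A A' : Fm} {ts : List Tm} : Deriv B A ts → Alpha A A' → Deriv B A' ts

/-- A single application of a generalized rule of γ- or δ-quantification. -/
inductive QStep : Fm → Fm → Prop where
  | gamma (c : Ctx) (q : Bool) (x : ℕ) (t : Tm) (H : Fm) :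
      c.accessible → q = c.pol → (∀ z ∈ t.varsT, z ∉ H.boundVars) →
      QStep (c.fill (Fm.subst x t H)) (c.fill (mkQ q x H))
  | delta (c : Ctx) (q : Bool) (y : ℕ) (H : Fm) :
      c.accessible → q = !c.pol → y ∉ c.freeVarsC →
      QStep (c.fill H) (c.fill (mkQ q y H))

/-- A single application of the generalized rule of γ-simplification:
simplification where `H` is of the form `Qy.C` with `Qy.` existentialoid. -/
inductive GSimpStep : Fm → Fm → Prop where
  | mk (c : Ctx) (y : ℕ) (C H' : Fm) :
      Alpha (mkQ c.pol y C) H' →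
      GSimpStep
        (c.fill (if c.pol then Fm.or (mkQ c.pol y C) H' else Fm.and (mkQ c.pol y C) H'))
        (c.fill (mkQ c.pol y C))


/-- The Skolem term `x*(y₁,…,yₘ)` for the removed universaloid variable `x`,
whose arguments are the variables of the existentialoid quantifiers in scope. -/
def skTm (x : ℕ) (γs : List ℕ) : Tm := .fn (some (Sum.inr x)) (γs.map Tm.var)

/-- Outer Skolemization: `b` is the polarity (`true` = an even number of negations
so far), `γs` the list of variables of the existentialoid quantifiers in whose
scope we are, in order. Universaloid quantifiers are removed and their variables
replaced by Skolem terms; existentialoid quantifiers are kept. -/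
def Fm.skolemize (b : Bool) (γs : List ℕ) : Fm → Fm
  | .atom p ts => .atom p ts
  | .neg A => .neg (A.skolemize (!b) γs)
  | .or A B => .or (A.skolemize b γs) (B.skolemize b γs)
  | .and A B => .and (A.skolemize b γs) (B.skolemize b γs)
  | .all x A => if b then Fm.subst x (skTm x γs) (A.skolemize b γs)
                else .all x (A.skolemize b (γs ++ [x]))
  | .ex x A => if b then .ex x (A.skolemize b (γs ++ [x]))
               else Fm.subst x (skTm x γs) (A.skolemize b γs)

/-- The outer Skolemized form of a formula. -/
def Fm.outerSk (A : Fm) : Fm := A.skolemize true []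

def falsum : Fm := .and (.atom 0 []) (.neg (.atom 0 []))
def verum : Fm := .or (.atom 0 []) (.neg (.atom 0 []))

def bigOr : List Fm → Fm
  | [] => falsum
  | [A] => A
  | A :: B :: rest => .or A (bigOr (B :: rest))

def bigAnd : List Fm → Fm
  | [] => verum
  | [A] => A
  | A :: B :: rest => .and A (bigAnd (B :: rest))

/-- All lists of length `k` over the given list. -/
def tuples : ℕ → List Tm → List (List Tm)
  | 0, _ => [[]]
  | k + 1, l => l.flatMap fun a => (tuples k l).map (a :: ·)

/-- The fresh constant `•` is included iff `F` contains neither constants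
nor free variables. -/
def Fm.allowBullet (F : Fm) : Bool :=
  F.freeVars.isEmpty && F.symsF.all (fun p => p.2 != 0)

/-- The champ fini `T_n(F)`: all terms of height `< n` built from the function
symbols (with their arities), constant symbols, and free variables of `F`
(with the fresh constant `•` added if `F` has neither constants nor free
variables).  `T_1(F) = ∅`. -/
def Fm.champTm (F : Fm) : ℕ → List Tm
  | 0 => []
  | 1 => []
  | n + 2 =>
      F.freeVars.map Tm.var
        ++ (if F.allowBullet then [Tm.fn none []] else [])
        ++ F.symsF.flatMap (fun p => (tuples p.2 (F.champTm (n + 1))).map (Tm.fn p.1))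

/-- The expansion `A^T` of `A` w.r.t. a finite set (list) of terms `T`. -/
def Fm.expandL (T : List Tm) : Fm → Fm
  | .atom p ts => .atom p ts
  | .neg A => .neg (A.expandL T)
  | .or A B => .or (A.expandL T) (B.expandL T)
  | .and A B => .and (A.expandL T) (B.expandL T)
  | .ex x A => bigOr (T.map fun t => Fm.subst x t (A.expandL T))
  | .all x A => bigAnd (T.map fun t => Fm.subst x t (A.expandL T))

/-- Property C of order `n` (for `n ≥ 1`): letting `F` be the outer Skolemized
form of `A`, for `n = 1` the formula `F` itself must be a sentential tautology,
and for `n > 1` the expansion `F^{T_n(F)}` must be a sentential tautology. -/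
def Fm.hasC (A : Fm) (n : ℕ) : Prop :=
  (if n = 1 then A.outerSk else Fm.expandL (A.outerSk.champTm n) A.outerSk).taut


/-- Reading every term that starts with a Skolem function symbol as an atomic
variable, via an injective coding `code` of terms into variable names. -/
def Tm.readSk (code : Tm → ℕ) : Tm → Tm
  | .var x => .var x
  | .fn (some (Sum.inr k)) ts => .var (code (.fn (some (Sum.inr k)) ts))
  | .fn (some (Sum.inl k)) ts => .fn (some (Sum.inl k)) (ts.attach.map fun ⟨t, _⟩ => Tm.readSk code t)
  | .fn none ts => .fn none (ts.attach.map fun ⟨t, _⟩ => Tm.readSk code t)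

def Fm.readSk (code : Tm → ℕ) : Fm → Fm
  | .atom p ts => .atom p (ts.map (Tm.readSk code))
  | .neg A => .neg (A.readSk code)
  | .or A B => .or (A.readSk code) (B.readSk code)
  | .and A B => .and (A.readSk code) (B.readSk code)
  | .all x A => .all x (A.readSk code)
  | .ex x A => .ex x (A.readSk code)

/-- The atoms (predicate symbol with argument terms) occurring in a formula. -/
def Fm.atoms : Fm → List (ℕ × List Tm)
  | .atom p ts => [(p, ts)]
  | .neg A => A.atoms
  | .or A B => A.atoms ++ B.atoms
  | .and A B => A.atoms ++ B.atoms
  | .all _ A => A.atoms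
  | .ex _ A => A.atoms

/-- All Boolean valuations of a finite list of atoms (all other atoms `false`). -/
def valuations : List (ℕ × List Tm) → List (ℕ → List Tm → Bool)
  | [] => [fun _ _ => false]
  | a :: rest =>
      (valuations rest).flatMap fun β =>
        [fun p ts => if p == a.1 && Tm.beqList ts a.2 then true else β p ts,
         fun p ts => if p == a.1 && Tm.beqList ts a.2 then false else β p ts]

/-- Computable check for sentential tautology. -/
def Fm.tautB (A : Fm) : Bool :=
  A.qfB && (valuations A.atoms).all fun β => A.sentEval β

/-- Computable check for Property C of order `n`. -/
def Fm.hasCB (A : Fm) (n : ℕ) : Bool :=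
  (if n = 1 then A.outerSk else Fm.expandL (A.outerSk.champTm n) A.outerSk).tautB

/-- The six rules of passage, read from left to right. -/
inductive PassEq : Fm → Fm → Prop where
  | p1 (x : ℕ) (A : Fm) : PassEq (.neg (.all x A)) (.ex x (.neg A))
  | p2 (x : ℕ) (A : Fm) : PassEq (.neg (.ex x A)) (.all x (.neg A))
  | p3 (x : ℕ) (A B : Fm) : x ∉ B.freeVars → PassEq (.or (.all x A) B) (.all x (.or A B))
  | p4 (x : ℕ) (A B : Fm) : x ∉ B.freeVars → PassEq (.or B (.all x A)) (.all x (.or B A))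
  | p5 (x : ℕ) (A B : Fm) : x ∉ B.freeVars → PassEq (.or (.ex x A) B) (.ex x (.or A B))
  | p6 (x : ℕ) (A B : Fm) : x ∉ B.freeVars → PassEq (.or B (.ex x A)) (.ex x (.or B A))

/-- A single inference step of Herbrand's historic modus-ponens-free calculus:
the shallow rules of γ- and δ-quantification (empty context), the generalized
(deep) rule of simplification, the twelve (deep) rules of passage, and renaming
of bound variables. -/
inductive HStep : Fm → Fm → Prop where
  | gammaSh (x : ℕ) (t : Tm) (H : Fm) :
      (∀ z ∈ t.varsT, z ∉ H.boundVars) →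
      HStep (Fm.subst x t H) (.ex x H)
  | deltaSh (y : ℕ) (H : Fm) :
      HStep H (.all y H)
  | simp (c : Ctx) (H H' : Fm) :
      Alpha H H' →
      HStep (c.fill (if c.pol then Fm.or H H' else Fm.and H H')) (c.fill H)
  | passage (c : Ctx) (L R : Fm) : PassEq L R → HStep (c.fill L) (c.fill R)
  | passageRev (c : Ctx) (L R : Fm) : PassEq L R → HStep (c.fill R) (c.fill L)
  | alpha (A B : Fm) : Alpha A B → HStep A B


/-!
Every rule preserves validity. Truth of `c.fill X` is monotone in `X` (with respect to
implication under all assignments) when the hole is under an even number of negations, and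
antitone otherwise; this gives soundness of γ-quantification (`H{x↦t}` implies `∃x.H`) and of
simplification (`H ∨ H'` implies `H` when `H'` is a variant of `H`) in arbitrary contexts.
For δ-quantification pick `d` with `Qy.H` true at `v` iff `H` is true at `v[y↦d]`
(a counterexample for `∀`, a witness for `∃`); as the hole is accessible and `y` is not free
in the context, `c.fill (Qy.H)` at `v` then has the truth value of `c.fill H` at `v[y↦d]`.
-/

theorem Tm.eval_fn {D : Type} (I : Interp D) (v : ℕ → D) (f : FSym) (ts : List Tm) :
    Tm.eval I v (.fn f ts) = I.fns f (ts.map (Tm.eval I v)) := by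
  rw [Tm.eval, List.attach_map_val (f := Tm.eval I v)]

theorem Tm.substT_fn (x : ℕ) (u : Tm) (f : FSym) (ts : List Tm) :
    Tm.substT x u (.fn f ts) = .fn f (ts.map (Tm.substT x u)) := by
  rw [Tm.substT, List.attach_map_val (f := Tm.substT x u)]

theorem Tm.varsT_fn (f : FSym) (ts : List Tm) :
    Tm.varsT (.fn f ts) = ts.flatMap Tm.varsT := by
  rw [Tm.varsT, List.foldr_attach (f := fun t l => Tm.varsT t ++ l)]
  induction ts <;> simp_all

theorem Tm.eval_congr {D : Type} (I : Interp D) {v w : ℕ → D} :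
    ∀ t : Tm, (∀ z ∈ t.varsT, v z = w z) → t.eval I v = t.eval I w
  | .var x, h => by simpa [Tm.eval, Tm.varsT] using h
  | .fn f ts, h => by
      rw [Tm.eval_fn, Tm.eval_fn, List.map_inj_left.mpr fun t ht =>
        Tm.eval_congr I t fun z hz =>
          h z (by rw [Tm.varsT_fn]; exact List.mem_flatMap.mpr ⟨t, ht, hz⟩)]

theorem Tm.eval_substT {D : Type} (I : Interp D) (v : ℕ → D) (x : ℕ) (u : Tm) :
    ∀ t : Tm, (Tm.substT x u t).eval I v = t.eval I (Function.update v x (u.eval I v))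
  | .var y => by by_cases h : y = x <;> simp [Tm.substT, Tm.eval, h]
  | .fn f ts => by
      rw [Tm.substT_fn, Tm.eval_fn, Tm.eval_fn, List.map_map]
      exact congrArg _ (List.map_congr_left fun t _ => Tm.eval_substT I v x u t)

theorem update_agree_of_agree_filter {D : Type} {v w : ℕ → D} {l : List ℕ} {x : ℕ} (d : D)
    (h : ∀ z ∈ l.filter (· ≠ x), v z = w z) :
    ∀ z ∈ l, Function.update v x d z = Function.update w x d z := by
  intro z hz
  by_cases hzx : z = x
  · simp [hzx]
  · simpa [hzx] using h z (by simp [hz, hzx])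

theorem Fm.holds_congr {D : Type} (I : Interp D) (A : Fm) {v w : ℕ → D}
    (h : ∀ z ∈ A.freeVars, v z = w z) : A.holds I v ↔ A.holds I w := by
  induction A generalizing v w with
  | atom p ts =>
      simp only [Fm.holds, Fm.freeVars, List.mem_flatMap] at h ⊢
      rw [List.map_congr_left fun t ht => Tm.eval_congr I t fun z hz => h z ⟨t, ht, hz⟩]
  | neg A ih => exact not_congr (ih h)
  | or A B ihA ihB =>
      simp only [Fm.freeVars, List.mem_append] at h
      exact or_congr (ihA fun z hz => h z (.inl hz)) (ihB fun z hz => h z (.inr hz))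
  | and A B ihA ihB =>
      simp only [Fm.freeVars, List.mem_append] at h
      exact and_congr (ihA fun z hz => h z (.inl hz)) (ihB fun z hz => h z (.inr hz))
  | all x A ih => exact forall_congr' fun d => ih (update_agree_of_agree_filter d h)
  | ex x A ih => exact exists_congr fun d => ih (update_agree_of_agree_filter d h)

theorem update_update_eval_comm {D : Type} (I : Interp D) (v : ℕ → D) {x y : ℕ} {u : Tm}
    (hyx : y ≠ x) (hyu : y ∉ u.varsT) (d : D) :
    Function.update (Function.update v y d) x (u.eval I (Function.update v y d)) =
      Function.update (Function.update v x (u.eval I v)) y d := by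
  rw [Tm.eval_congr I u fun z hz => Function.update_of_ne (ne_of_mem_of_not_mem hz hyu) d v,
    Function.update_comm hyx]

theorem Fm.holds_subst {D : Type} (I : Interp D) (x : ℕ) (u : Tm) (A : Fm) (v : ℕ → D)
    (hu : ∀ z ∈ u.varsT, z ∉ A.boundVars) :
    (A.subst x u).holds I v ↔ A.holds I (Function.update v x (u.eval I v)) := by
  induction A generalizing v with
  | atom p ts =>
      simp only [Fm.subst, Fm.holds, List.map_map]
      exact Iff.of_eq (congrArg _ (List.map_congr_left fun t _ => Tm.eval_substT I v x u t))
  | neg A ih => exact not_congr (ih v hu)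
  | or A B ihA ihB =>
      simp only [Fm.boundVars, List.mem_append, not_or] at hu
      exact or_congr (ihA v fun z hz => (hu z hz).1) (ihB v fun z hz => (hu z hz).2)
  | and A B ihA ihB =>
      simp only [Fm.boundVars, List.mem_append, not_or] at hu
      exact and_congr (ihA v fun z hz => (hu z hz).1) (ihB v fun z hz => (hu z hz).2)
  | all y A ih | ex y A ih =>
      simp only [Fm.boundVars, List.mem_cons, not_or] at hu
      by_cases hyx : y = x
      · subst hyx
        simp [Fm.subst, Fm.holds]
      · have hyu : y ∉ u.varsT := fun hy => (hu y hy).1 rfl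
        simp only [Fm.subst, if_neg hyx, Fm.holds, ih _ fun z hz => (hu z hz).2,
          update_update_eval_comm I v hyx hyu]

theorem Fm.holds_rename {D : Type} (I : Interp D) (v : ℕ → D) {x y : ℕ} {A : Fm}
    (hfree : y ∉ A.freeVars) (hbound : y ∉ A.boundVars) (d : D) :
    (A.subst x (.var y)).holds I (Function.update v y d) ↔ A.holds I (Function.update v x d) := by
  rw [Fm.holds_subst I x _ A _ (by simpa [Tm.varsT] using hbound)]
  refine Fm.holds_congr I A fun z hz => ?_
  by_cases hzx : z = x
  · simp [hzx, Tm.eval]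
  · have hzy : z ≠ y := ne_of_mem_of_not_mem hz hfree
    simp [hzx, hzy]

theorem Alpha.holds_iff {A B : Fm} (h : Alpha A B) {D : Type} (I : Interp D) (v : ℕ → D) :
    A.holds I v ↔ B.holds I v := by
  induction h generalizing v with
  | refl A => rfl
  | symm _ ih => exact (ih v).symm
  | trans _ _ ih₁ ih₂ => exact (ih₁ v).trans (ih₂ v)
  | negc _ ih => exact not_congr (ih v)
  | orc _ _ ih₁ ih₂ => exact or_congr (ih₁ v) (ih₂ v)
  | andc _ _ ih₁ ih₂ => exact and_congr (ih₁ v) (ih₂ v)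
  | allc x _ ih => exact forall_congr' fun d => ih _
  | exc x _ ih => exact exists_congr fun d => ih _
  | allRename x y A hfree hbound =>
      exact forall_congr' fun d => (Fm.holds_rename I v hfree hbound d).symm
  | exRename x y A hfree hbound =>
      exact exists_congr fun d => (Fm.holds_rename I v hfree hbound d).symm

theorem Fm.sentEval_holds_iff {D : Type} (I : Interp D) (v : ℕ → D)
    [∀ p ds, Decidable (I.prd p ds)] {A : Fm} (hA : A.qf) :
    A.sentEval (fun p ts => decide (I.prd p (ts.map (Tm.eval I v)))) = true ↔ A.holds I v := by
  induction A with
  | atom p ts => simp [Fm.sentEval, Fm.holds]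
  | neg A ih => simp [Fm.sentEval, Fm.holds, ← ih hA]
  | or A B ihA ihB => simp [Fm.sentEval, Fm.holds, ← ihA hA.1, ← ihB hA.2]
  | and A B ihA ihB => simp [Fm.sentEval, Fm.holds, ← ihA hA.1, ← ihB hA.2]
  | all _ _ _ | ex _ _ _ => exact hA.elim

theorem Fm.taut.valid {A : Fm} (h : A.taut) : A.valid := by
  classical
  intro D _ I v
  exact (Fm.sentEval_holds_iff I v h.1).mp (h.2 _)

theorem Ctx.holds_fill_mono {D : Type} (I : Interp D) (c : Ctx) {X Y : Fm}
    (hpos : c.pol = true → ∀ w, X.holds I w → Y.holds I w)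
    (hneg : c.pol = false → ∀ w, Y.holds I w → X.holds I w) (v : ℕ → D) :
    (c.fill X).holds I v → (c.fill Y).holds I v := by
  induction c generalizing X Y v with
  | hole => exact hpos rfl v
  | negC c ih =>
      simp only [Ctx.pol, Bool.not_eq_true', Bool.not_eq_false'] at hpos hneg
      exact mt (ih hneg hpos v)
  | orL c B ih => exact Or.imp_left (ih hpos hneg v)
  | orR B c ih => exact Or.imp_right (ih hpos hneg v)
  | andL c B ih => exact And.imp_left (ih hpos hneg v)
  | andR B c ih => exact And.imp_right (ih hpos hneg v)
  | allC x c ih => exact forall_imp fun d => ih hpos hneg _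
  | exC x c ih => exact Exists.imp fun d => ih hpos hneg _

theorem Ctx.holds_fill_iff_of_accessible {D : Type} (I : Interp D) {c : Ctx}
    (hc : c.accessible) {X Y : Fm} {v w : ℕ → D} (hvw : ∀ z ∈ c.freeVarsC, v z = w z)
    (hXY : X.holds I v ↔ Y.holds I w) : (c.fill X).holds I v ↔ (c.fill Y).holds I w := by
  induction c with
  | hole => exact hXY
  | negC c ih => exact not_congr (ih hc hvw)
  | orL c B ih | andL c B ih =>
      simp only [Ctx.freeVarsC, List.mem_append] at hvw
      simp only [Ctx.fill, Fm.holds, ih hc fun z hz => hvw z (.inl hz),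
        Fm.holds_congr I B fun z hz => hvw z (.inr hz)]
  | orR B c ih | andR B c ih =>
      simp only [Ctx.freeVarsC, List.mem_append] at hvw
      simp only [Ctx.fill, Fm.holds, ih hc fun z hz => hvw z (.inr hz),
        Fm.holds_congr I B fun z hz => hvw z (.inl hz)]
  | allC _ _ _ | exC _ _ _ => exact hc.elim

theorem exists_holds_mkQ_iff {D : Type} [Nonempty D] (I : Interp D) (v : ℕ → D)
    (q : Bool) (y : ℕ) (H : Fm) :
    ∃ d, (mkQ q y H).holds I v ↔ H.holds I (Function.update v y d) := by
  cases q
  · by_cases hall : ∀ d, H.holds I (Function.update v y d)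
    · exact ⟨Classical.arbitrary D, iff_of_true hall (hall _)⟩
    · obtain ⟨d, hd⟩ := not_forall.mp hall
      exact ⟨d, iff_of_false hall hd⟩
  · by_cases hex : ∃ d, H.holds I (Function.update v y d)
    · obtain ⟨d, hd⟩ := hex
      exact ⟨d, iff_of_true ⟨d, hd⟩ hd⟩
    · exact ⟨Classical.arbitrary D, iff_of_false hex fun hd => hex ⟨_, hd⟩⟩

theorem Ctx.valid_fill_gamma {c : Ctx} {q : Bool} {x : ℕ} {t : Tm} {H : Fm} (hq : q = c.pol)
    (ht : ∀ z ∈ t.varsT, z ∉ H.boundVars) (h : (c.fill (H.subst x t)).valid) :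
    (c.fill (mkQ q x H)).valid := by
  intro D hD I v
  refine c.holds_fill_mono I (fun hpol w hw => ?_) (fun hpol w hw => ?_) v (h D hD I v)
  · rw [hq, hpol]
    exact ⟨_, (Fm.holds_subst I x t H w ht).mp hw⟩
  · rw [hq, hpol] at hw
    exact (Fm.holds_subst I x t H w ht).mpr (hw _)

theorem Ctx.valid_fill_delta {c : Ctx} (q : Bool) {y : ℕ} {H : Fm} (hc : c.accessible)
    (hy : y ∉ c.freeVarsC) (h : (c.fill H).valid) : (c.fill (mkQ q y H)).valid := by
  intro D hD I v
  obtain ⟨d, hd⟩ := exists_holds_mkQ_iff I v q y H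
  refine (Ctx.holds_fill_iff_of_accessible I hc (fun z hz => ?_) hd).mpr (h D hD I _)
  exact (Function.update_of_ne (ne_of_mem_of_not_mem hz hy) d v).symm

theorem Ctx.valid_fill_simp {c : Ctx} {H H' : Fm} (hH : Alpha H H')
    (h : (c.fill (if c.pol then Fm.or H H' else Fm.and H H')).valid) : (c.fill H).valid := by
  intro D hD I v
  refine c.holds_fill_mono I (fun hpol w hw => ?_) (fun hpol w hw => ?_) v (h D hD I v)
  · rw [if_pos hpol] at hw
    exact hw.elim id ((hH.holds_iff I w).mpr)
  · rw [if_neg (by simp [hpol])]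
    exact ⟨hw, (hH.holds_iff I w).mp hw⟩

theorem Deriv.valid {B A : Fm} {ts : List Tm} (h : Deriv B A ts) (hB : B.valid) : A.valid := by
  induction h with
  | refl => exact hB
  | gamma c q x t H _ _ hq ht ih => exact c.valid_fill_gamma hq ht ih
  | delta c q y H _ hc _ hy ih => exact c.valid_fill_delta q hc hy ih
  | simp c H H' _ hH ih => exact c.valid_fill_simp hH ih
  | alpha _ hA ih => exact fun D hD I v => (hA.holds_iff I v).mp (ih D hD I v)

/-- **Soundness of Herbrand's modus-ponens-free calculus.** If `A` is derivable
from a sentential tautology by applications of the generalized rules of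
simplification, γ-quantification and δ-quantification (and renamings of bound
variables), then `A` is valid. -/
theorem soundness_of_herbrand_calculus (A : Fm) :
    (∃ (B : Fm) (ts : List Tm), B.taut ∧ Deriv B A ts) → A.valid := by
  rintro ⟨B, ts, hB, hA⟩
  exact hA.valid hB.valid

end Herbrand
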